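/- arXiv:2603.28285 — 4 statements merged into one kernel-verified Lean document; each statement's English description precedes it below -/
import Mathlib

section
/- With q₁=ξ+μ, q₂=β₁Λ/μ, q₃=α₁Λ/(μκ), q₄=γ+d+μ, and coefficients A₁=q₁+q₄+ω, A₂=q₁q₄+ω(q₁+q₄)−ξq₂, A₃=ω(q₁q₄−ξq₂)−ξφq₃ (all parameters positive): if A₃>0 then A₂>0 and A₁A₂>A₃. -/
theorem routh_hurwitz_coeffs (ξ μ β₁ Λ α₁ κ γ d ω φ : ℝ)
    (hξ : 0 < ξ) (hμ : 0 < μ) (hβ₁ : 0 < β₁) (hΛ : 0 < Λ) (hα₁ : 0 < α₁)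
    (hκ : 0 < κ) (hγ : 0 < γ) (hd : 0 < d) (hω : 0 < ω) (hφ : 0 < φ) :
    let q₁ := ξ + μ
    let q₂ := β₁ * Λ / μ
    let q₃ := α₁ * Λ / (μ * κ)
    let q₄ := γ + d + μ
    let A₁ := q₁ + q₄ + ω
    let A₂ := q₁ * q₄ + ω * (q₁ + q₄) - ξ * q₂
    let A₃ := ω * (q₁ * q₄ - ξ * q₂) - ξ * φ * q₃
    0 < A₃ → 0 < A₂ ∧ A₁ * A₂ > A₃ := by
  intro q₁ q₂ q₃ q₄ A₁ A₂ A₃ hA₃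
  have hq₃ : 0 < q₃ := by positivity
  have h1 : 0 < ω * (q₁ * q₄ - ξ * q₂) := by
    have : 0 < ξ * φ * q₃ := by positivity
    simp only [A₃] at hA₃; linarith
  have hD : 0 < q₁ * q₄ - ξ * q₂ := by
    by_contra h; push_neg at h; nlinarith
  have hq₁ : 0 < q₁ := by positivity
  have hq₄ : 0 < q₄ := by positivity
  constructor
  · simp only [A₂]; nlinarith
  · simp only [A₁, A₂, A₃]
    nlinarith [mul_pos hq₁ hω, mul_pos hq₄ hω, mul_pos (mul_pos hξ hφ) hq₃,
      mul_pos (add_pos hq₁ hq₄) hD, mul_pos (add_pos hq₁ hq₄) (mul_pos (add_pos (add_pos hq₁ hq₄) hω) hω)]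
end

section
/- If J_c = 1 (equivalently A₃ = 0), then the characteristic polynomial λ³+A₁λ²+A₂λ+A₃ factors as λ(λ²+A₁λ+A₂) with A₁>0 and A₂>0, so 0 is a simple root and the other two roots have negative real part; hence the stability modulus of Ā₂ equals 0. -/
lemma quad_root_neg_re (a b : ℝ) (ha : 0 < a) (hb : 0 < b) (z : ℂ)
    (h : z ^ 2 + (a : ℂ) * z + (b : ℂ) = 0) : z.re < 0 := by
  have hre : z.re ^ 2 - z.im ^ 2 + a * z.re + b = 0 := by
    have := congrArg Complex.re h
    simpa [pow_two, Complex.mul_re, Complex.mul_im] using this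
  have him : 2 * z.re * z.im + a * z.im = 0 := by
    have := congrArg Complex.im h
    simp [pow_two, Complex.mul_re, Complex.mul_im] at this
    linarith
  by_contra hge
  push_neg at hge
  have him2 : z.im ^ 2 * (2 * z.re + a) = 0 := by nlinarith [him]
  have hpos : 0 < 2 * z.re + a := by linarith
  have : z.im ^ 2 = 0 := by
    rcases mul_eq_zero.mp him2 with h' | h'
    · exact h'
    · linarith
  nlinarith [this, hre]

theorem critical_case_stability_modulus (ξ μ β₁ Λ α₁ κ γ d ω φ : ℝ)
    (hξ : 0 < ξ) (hμ : 0 < μ) (hβ₁ : 0 < β₁) (hΛ : 0 < Λ) (hα₁ : 0 < α₁)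
    (hκ : 0 < κ) (hγ : 0 < γ) (hd : 0 < d) (hω : 0 < ω) (hφ : 0 < φ) :
    let q₁ := ξ + μ
    let q₂ := β₁ * Λ / μ
    let q₃ := α₁ * Λ / (μ * κ)
    let q₄ := γ + d + μ
    let A₁ := q₁ + q₄ + ω
    let A₂ := q₁ * q₄ + ω * (q₁ + q₄) - ξ * q₂
    let A₃ := ω * (q₁ * q₄ - ξ * q₂) - ξ * φ * q₃
    A₃ = 0 →
      0 < A₁ ∧ 0 < A₂ ∧
      (∀ z : ℂ, z ^ 3 + (A₁ : ℂ) * z ^ 2 + (A₂ : ℂ) * z + (A₃ : ℂ) =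
        z * (z ^ 2 + (A₁ : ℂ) * z + (A₂ : ℂ))) ∧
      (∀ z : ℂ, z ^ 3 + (A₁ : ℂ) * z ^ 2 + (A₂ : ℂ) * z + (A₃ : ℂ) = 0 →
        z = 0 ∨ z.re < 0) ∧
      ((0 : ℂ) ^ 3 + (A₁ : ℂ) * (0 : ℂ) ^ 2 + (A₂ : ℂ) * 0 + (A₃ : ℂ) = 0) := by
  intro q₁ q₂ q₃ q₄ A₁ A₂ A₃ hA₃
  have hq₁ : 0 < q₁ := by show 0 < ξ + μ; positivity
  have hq₄ : 0 < q₄ := by show 0 < γ + d + μ; positivity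
  have hq₃ : 0 < q₃ := by show 0 < α₁ * Λ / (μ * κ); positivity
  have hkey : 0 < q₁ * q₄ - ξ * q₂ := by
    have h1 : ω * (q₁ * q₄ - ξ * q₂) = ξ * φ * q₃ := by
      have : ω * (q₁ * q₄ - ξ * q₂) - ξ * φ * q₃ = 0 := hA₃
      linarith
    nlinarith [mul_pos (mul_pos hξ hφ) hq₃]
  have hA₁ : 0 < A₁ := by
    show 0 < q₁ + q₄ + ω; positivity
  have hA₂ : 0 < A₂ := by
    show 0 < q₁ * q₄ + ω * (q₁ + q₄) - ξ * q₂
    nlinarith [mul_pos hω (add_pos hq₁ hq₄)]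
  refine ⟨hA₁, hA₂, ?_, ?_, ?_⟩
  · intro z
    rw [hA₃]
    push_cast
    ring
  · intro z hz
    rw [hA₃] at hz
    push_cast at hz
    have hfac : z * (z ^ 2 + (A₁ : ℂ) * z + (A₂ : ℂ)) = 0 := by
      rw [← hz]; ring
    rcases mul_eq_zero.mp hfac with h | h
    · exact Or.inl h
    · exact Or.inr (quad_root_neg_re A₁ A₂ hA₁ hA₂ z h)
  · rw [hA₃]; push_cast; ring
end

section
/- Let R_c = ξ/((ξ+μ)(γ+d+μ)) · [β₁S₀ + β₂V₀ + (φ/(κω))(α₁S₀+α₂V₀)] and J_c = (Λ/μ)·ξ/((ξ+μ)(γ+d+μ))·(φα₁/(κω)+β₁). If β₂≤β₁, α₂≤α₁, and S₀+V₀ < Λ/μ, then R_c < J_c. In particular J_c ≤ 1 implies R_c < 1. -/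
theorem Rc_lt_Jc (ξ μ γ d β₁ β₂ α₁ α₂ φ κ ω Λ S₀ V₀ : ℝ)
    (hξ : 0 < ξ) (hμ : 0 < μ) (hγ : 0 < γ) (hd : 0 < d)
    (hβ₁ : 0 < β₁) (hβ₂ : 0 < β₂) (hα₁ : 0 < α₁) (hα₂ : 0 < α₂)
    (hφ : 0 < φ) (hκ : 0 < κ) (hω : 0 < ω) (hΛ : 0 < Λ)
    (hS₀ : 0 < S₀) (hV₀ : 0 ≤ V₀)
    (hβ : β₂ ≤ β₁) (hα : α₂ ≤ α₁) (hSV : S₀ + V₀ < Λ / μ) :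
    let Rc := ξ / ((ξ + μ) * (γ + d + μ)) *
      (β₁ * S₀ + β₂ * V₀ + (φ / (κ * ω)) * (α₁ * S₀ + α₂ * V₀))
    let Jc := (Λ / μ) * (ξ / ((ξ + μ) * (γ + d + μ))) * (φ * α₁ / (κ * ω) + β₁)
    Rc < Jc ∧ (Jc ≤ 1 → Rc < 1) := by
  intro Rc Jc
  have hC : 0 < ξ / ((ξ + μ) * (γ + d + μ)) := by positivity
  have hK : 0 < φ / (κ * ω) := by positivity
  have key : Rc < Jc := by
    have h1 : β₁ * S₀ + β₂ * V₀ + (φ / (κ * ω)) * (α₁ * S₀ + α₂ * V₀)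
        ≤ (β₁ + (φ / (κ * ω)) * α₁) * (S₀ + V₀) := by nlinarith [mul_nonneg (sub_nonneg.2 hβ) hV₀, mul_nonneg (mul_nonneg hK.le (sub_nonneg.2 hα)) hV₀]
    have h2 : (β₁ + (φ / (κ * ω)) * α₁) * (S₀ + V₀)
        < (β₁ + (φ / (κ * ω)) * α₁) * (Λ / μ) := by
      apply mul_lt_mul_of_pos_left hSV; positivity
    have h3 : Rc ≤ ξ / ((ξ + μ) * (γ + d + μ)) * ((β₁ + (φ / (κ * ω)) * α₁) * (S₀ + V₀)) :=
      mul_le_mul_of_nonneg_left h1 hC.le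
    have h4 : ξ / ((ξ + μ) * (γ + d + μ)) * ((β₁ + (φ / (κ * ω)) * α₁) * (S₀ + V₀))
        < Jc := by
      have := mul_lt_mul_of_pos_left h2 hC
      calc _ < ξ / ((ξ + μ) * (γ + d + μ)) * ((β₁ + (φ / (κ * ω)) * α₁) * (Λ / μ)) := this
        _ = Jc := by show _ = _; ring
    exact lt_of_le_of_lt h3 h4
  exact ⟨key, fun h => lt_of_lt_of_le key h⟩
end

section
/- Consider the 3×3 matrix B = [[-(γ+d+μ), ξ, 0],[β₁S₀+β₂V₀, -(ξ+μ), (α₁S₀+α₂V₀)/κ],[φ, 0, -ω]] with all parameters positive and the constant R_c = ξ[β₁S₀+β₂V₀+(φ/(κω))(α₁S₀+α₂V₀)]/((ξ+μ)(γ+d+μ)). Then det(B) < 0 if R_c < 1 and det(B) > 0 if R_c > 1. In particular, if R_c > 1 then B has a real eigenvalue with positive real part. -/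
/-! `det B = ω (ξ + μ) (γ + d + μ) (R_c - 1)`, which gives both signs. The characteristic polynomial
is a monic cubic whose value at `0` is `-det B`, so when `det B > 0` it is negative at `0` and tends
to `+∞`, and the intermediate value theorem yields a positive root. -/

open Matrix Polynomial Filter

theorem Polynomial.Monic.exists_pos_isRoot_of_eval_zero_neg {p : ℝ[X]} (hp : p.Monic)
    (h0 : p.eval 0 < 0) : ∃ x, 0 < x ∧ p.IsRoot x := by
  have hdeg : 0 < p.degree := by
    refine natDegree_pos_iff_degree_pos.mp (Nat.pos_of_ne_zero fun h => ?_)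
    rw [eq_one_of_monic_natDegree_zero hp h, eval_one] at h0
    norm_num at h0
  have htop : Tendsto (fun x => p.eval x) atTop atTop :=
    tendsto_atTop_of_leadingCoeff_nonneg p hdeg (by rw [hp.leadingCoeff]; exact zero_le_one)
  obtain ⟨c, hc, hc0⟩ := ((htop.eventually_ge_atTop 0).and (eventually_ge_atTop 0)).exists
  obtain ⟨x, hx, hroot⟩ :=
    intermediate_value_Ioc hc0 p.continuous.continuousOn (show (0 : ℝ) ∈ _ from ⟨h0, hc⟩)
  exact ⟨x, hx.1, hroot⟩

theorem Matrix.exists_pos_isRoot_charpoly_of_det_pos {n : Type*} [Fintype n] [DecidableEq n]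
    (M : Matrix n n ℝ) (hn : Odd (Fintype.card n)) (hdet : 0 < M.det) :
    ∃ x, 0 < x ∧ M.charpoly.IsRoot x := by
  refine M.charpoly_monic.exists_pos_isRoot_of_eval_zero_neg ?_
  rw [det_eq_sign_charpoly_coeff, hn.neg_one_pow, coeff_zero_eq_eval_zero] at hdet
  linarith

theorem det_infected_block (a c x b e f ω : ℝ) :
    !![-a, x, 0; b, -c, e; f, 0, -ω].det = x * (b * ω + e * f) - a * c * ω := by
  simp only [det_fin_three, of_apply, cons_val', cons_val_zero, cons_val_one, cons_val,
    cons_val_fin_one]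
  ring

theorem infected_block_det_sign_general (ξ μ γ d ω φ β₁ β₂ α₁ α₂ κ S₀ V₀ : ℝ)
    (hξ : 0 < ξ) (hμ : 0 < μ) (hγ : 0 < γ) (hd : 0 < d) (hω : 0 < ω) :
    let B : Matrix (Fin 3) (Fin 3) ℝ :=
      !![-(γ + d + μ), ξ, 0;
        β₁ * S₀ + β₂ * V₀, -(ξ + μ), (α₁ * S₀ + α₂ * V₀) / κ;
        φ, 0, -ω]
    let Rc := ξ * (β₁ * S₀ + β₂ * V₀ + (φ / (κ * ω)) * (α₁ * S₀ + α₂ * V₀)) /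
      ((ξ + μ) * (γ + d + μ))
    (Rc < 1 → B.det < 0) ∧ (1 < Rc → 0 < B.det) ∧
    (1 < Rc → ∃ lam : ℝ, 0 < lam ∧ B.charpoly.IsRoot lam) := by
  intro B Rc
  have hP : 0 < (ξ + μ) * (γ + d + μ) := by positivity
  have hdet : B.det = ω * ((ξ + μ) * (γ + d + μ)) * (Rc - 1) := by
    have hφω : φ / (κ * ω) * ω = φ / κ := by
      rw [div_mul_eq_mul_div, mul_div_mul_right _ _ hω.ne']
    have hRc : Rc * ((ξ + μ) * (γ + d + μ)) =
        ξ * (β₁ * S₀ + β₂ * V₀ + (φ / (κ * ω)) * (α₁ * S₀ + α₂ * V₀)) :=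
      div_mul_cancel₀ _ hP.ne'
    rw [det_infected_block]
    linear_combination (-ω) * hRc - (ξ * (α₁ * S₀ + α₂ * V₀)) * hφω
  have hpos : 1 < Rc → 0 < B.det := fun h => by
    rw [hdet]; exact mul_pos (by positivity) (by linarith)
  refine ⟨fun h => ?_, hpos, fun h => B.exists_pos_isRoot_charpoly_of_det_pos (by decide) (hpos h)⟩
  rw [hdet]
  exact mul_neg_of_pos_of_neg (by positivity) (by linarith)

theorem infected_block_det_sign (ξ μ γ d ω φ β₁ β₂ α₁ α₂ κ S₀ V₀ : ℝ)
    (hξ : 0 < ξ) (hμ : 0 < μ) (hγ : 0 < γ) (hd : 0 < d) (hω : 0 < ω)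
    (hφ : 0 < φ) (hβ₁ : 0 < β₁) (hβ₂ : 0 < β₂) (hα₁ : 0 < α₁) (hα₂ : 0 < α₂)
    (hκ : 0 < κ) (hS₀ : 0 < S₀) (hV₀ : 0 < V₀) :
    let B : Matrix (Fin 3) (Fin 3) ℝ :=
      !![-(γ + d + μ), ξ, 0;
        β₁ * S₀ + β₂ * V₀, -(ξ + μ), (α₁ * S₀ + α₂ * V₀) / κ;
        φ, 0, -ω]
    let Rc := ξ * (β₁ * S₀ + β₂ * V₀ + (φ / (κ * ω)) * (α₁ * S₀ + α₂ * V₀)) /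
      ((ξ + μ) * (γ + d + μ))
    (Rc < 1 → B.det < 0) ∧ (1 < Rc → 0 < B.det) ∧
    (1 < Rc → ∃ lam : ℝ, 0 < lam ∧ B.charpoly.IsRoot lam) :=
  infected_block_det_sign_general ξ μ γ d ω φ β₁ β₂ α₁ α₂ κ S₀ V₀ hξ hμ hγ hd hω
end
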